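/- Let G be a finite simple graph that is bipartite with bipartition (V, W), and assume G is unmixed, both V and W are maximal independent sets of G, |V| = n, and there exist maximal independent sets F_0 = V, F_1, …, F_n = W of G with |F_i ∩ F_{i+1}| = n − 1 for every i = 0,…,n−1. Then |W| = n and the vertices can be enumerated V = {x_1,…,x_n} and W = {y_1,…,y_n} so that: (i) {x_i, y_i} is an edge of G for every i; (ii) whenever {x_i, y_j} is an edge then i ≤ j; (iii) whenever {x_i, y_j} and {x_j, y_k} are edges, {x_i, y_k} is also an edge. -/

import Mathlib

/-- A set of vertices is independent if no two of its elements are adjacent. -/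
def IndepSet {α : Type*} (G : SimpleGraph α) (S : Finset α) : Prop :=
  ∀ ⦃u⦄, u ∈ S → ∀ ⦃v⦄, v ∈ S → ¬ G.Adj u v

/-- A maximal independent set: an independent set not properly contained in any
other independent set. -/
def MaxIndepSet {α : Type*} (G : SimpleGraph α) (S : Finset α) : Prop :=
  IndepSet G S ∧ ∀ ⦃T : Finset α⦄, IndepSet G T → S ⊆ T → T = S

/-- `G` is unmixed if all maximal independent sets have the same cardinality. -/
def Unmixed {α : Type*} (G : SimpleGraph α) : Prop :=
  ∀ ⦃S T : Finset α⦄, MaxIndepSet G S → MaxIndepSet G T → S.card = T.card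

/-- `(V, W)` is a bipartition of `G`: the vertex set is the disjoint union of `V` and `W`
and every edge joins a vertex of `V` to a vertex of `W`. -/
def IsBipartition {α : Type*} [Fintype α] [DecidableEq α]
    (G : SimpleGraph α) (V W : Finset α) : Prop :=
  Disjoint V W ∧ V ∪ W = Finset.univ ∧
    ∀ ⦃u v⦄, G.Adj u v → (u ∈ V ∧ v ∈ W) ∨ (u ∈ W ∧ v ∈ V)

open Finset Function

/-!
Consecutive members of the chain differ by one exchange `F (i + 1) = F i - xᵢ + yᵢ`.
The size of `F k ∩ W` grows by at most one per step and goes from `0` to `n` in `n` steps,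
so every exchange trades a vertex of `V` for one of `W`: `F k` consists of `x_k, …, x_{n-1}`
and `y_0, …, y_{k-1}`. This yields the labeling and (ii). If `xᵢ` and `yᵢ` were not adjacent,
`F i ∪ F (i + 1)` would be independent, contradicting maximality: this is (i). By
unmixedness every maximal independent set has `n` elements, so it meets each edge of the
perfect matching `{xⱼ, yⱼ}`. For (iii), a maximal independent set containing non-adjacent
`xᵢ` and `y_k` avoids `yⱼ` (a neighbour of `xᵢ`), hence contains `xⱼ`, a neighbour of `y_k`.
-/

section Order

variable {β : Type*} [Preorder β] {f : ℕ → β} {n : ℕ}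

lemma monotoneOn_nat_Iic_of_le_succ (hf : ∀ k < n, f k ≤ f (k + 1)) :
    MonotoneOn f (Set.Iic n) := by
  intro k _ l hl hkl
  induction l, hkl using Nat.le_induction with
  | base => exact le_rfl
  | succ l _ ih => exact (ih (Set.mem_Iic.2 (Nat.le_of_succ_le hl))).trans (hf l hl)

lemma antitoneOn_nat_Iic_of_succ_le (hf : ∀ k < n, f (k + 1) ≤ f k) :
    AntitoneOn f (Set.Iic n) :=
  monotoneOn_nat_Iic_of_le_succ (β := βᵒᵈ) hf

end Order

lemma Function.injective_of_lt_imp_ne {ι β : Type*} [LinearOrder ι] {f : ι → β}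
    (h : ∀ i j, i < j → f i ≠ f j) : Injective f := fun i j hij =>
  by_contra fun hne => (lt_or_gt_of_ne hne).elim (h i j · hij) (h j i · hij.symm)

lemma Nat.apply_succ_eq_add_one_of_le_add_one {a : ℕ → ℕ} {n : ℕ} (h0 : a 0 = 0)
    (hn : a n = n) (hstep : ∀ k < n, a (k + 1) ≤ a k + 1) : ∀ k < n, a (k + 1) = a k + 1 := by
  have hgrow : ∀ k j, k + j ≤ n → a (k + j) ≤ a k + j := by
    intro k j
    induction j with
    | zero => simp
    | succ j ih =>
      intro h
      rw [← add_assoc]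
      have := hstep (k + j) (by omega)
      have := ih (by omega)
      omega
  intro k hk
  have hlow := hgrow 0 k (by omega)
  have hhigh := hgrow (k + 1) (n - (k + 1)) (by omega)
  rw [zero_add] at hlow
  rw [Nat.add_sub_cancel' hk] at hhigh
  have := hstep k hk
  omega

namespace Finset

variable {α : Type*} [DecidableEq α] {S T W : Finset α} {a b : α}

lemma mem_and_notMem_of_sdiff_eq_singleton (ha : S \ T = {a}) : a ∈ S ∧ a ∉ T :=
  mem_sdiff.1 (ha ▸ mem_singleton_self a)

lemma exists_sdiff_eq_singleton (h : #(S ∩ T) + 1 = #S) : ∃ a, S \ T = {a} :=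
  card_eq_one.1 (by have := card_sdiff_add_card_inter S T; omega)

lemma inter_subset_insert_inter_of_sdiff_subset (hb : T \ S ⊆ {b}) :
    T ∩ W ⊆ insert b (S ∩ W) := by
  intro v hv
  obtain ⟨hvT, hvW⟩ := mem_inter.1 hv
  by_cases hvS : v ∈ S
  · exact mem_insert_of_mem (mem_inter.2 ⟨hvS, hvW⟩)
  · exact mem_insert.2 (Or.inl (mem_singleton.1 (hb (mem_sdiff.2 ⟨hvT, hvS⟩))))

lemma inter_subset_inter_of_sdiff_subset (hb : T \ S ⊆ {b}) (hbW : b ∉ W) :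
    T ∩ W ⊆ S ∩ W := fun _ hv =>
  (mem_insert.1 (inter_subset_insert_inter_of_sdiff_subset hb hv)).resolve_left
    fun hvb => hbW (hvb ▸ (mem_inter.1 hv).2)

lemma card_inter_le_add_one_of_sdiff_subset (hb : T \ S ⊆ {b}) :
    #(T ∩ W) ≤ #(S ∩ W) + 1 :=
  (card_le_card (inter_subset_insert_inter_of_sdiff_subset hb)).trans (card_insert_le _ _)

lemma notMem_and_mem_of_card_inter_lt (ha : S \ T = {a}) (hb : T \ S = {b})
    (h : #(S ∩ W) < #(T ∩ W)) : a ∉ W ∧ b ∈ W := by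
  refine ⟨fun haW => ?_, by_contra fun hbW => (card_le_card
    (inter_subset_inter_of_sdiff_subset hb.subset hbW)).not_gt h⟩
  obtain ⟨haS, haT⟩ := mem_and_notMem_of_sdiff_eq_singleton ha
  have hsub : T ∩ W ⊆ insert b ((S ∩ W).erase a) := fun v hv => by
    rcases mem_insert.1 (inter_subset_insert_inter_of_sdiff_subset hb.subset hv) with hvb | hvSW
    · exact mem_insert.2 (Or.inl hvb)
    · exact mem_insert_of_mem (mem_erase.2 ⟨fun hva => haT (hva ▸ (mem_inter.1 hv).1), hvSW⟩)
  have := (card_le_card hsub).trans (card_insert_le _ _)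
  rw [card_erase_of_mem (mem_inter.2 ⟨haS, haW⟩)] at this
  have := card_pos.2 ⟨a, mem_inter.2 ⟨haS, haW⟩⟩
  omega

end Finset

section ExchangeChain

variable {α : Type*} [DecidableEq α] {n : ℕ} {F : ℕ → Finset α} {x y : Fin n → α}

lemma notMem_and_mem_of_exchange_chain (hx : ∀ i : Fin n, F i \ F (i + 1) = {x i})
    (hy : ∀ i : Fin n, F (i + 1) \ F i = {y i}) {W : Finset α} (h0 : Disjoint (F 0) W)
    (hn : #(F n ∩ W) = n) (i : Fin n) : x i ∉ W ∧ y i ∈ W := by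
  have hclimb := Nat.apply_succ_eq_add_one_of_le_add_one (a := fun k => #(F k ∩ W))
    (by simp [disjoint_iff_inter_eq_empty.1 h0]) hn
    fun k hk => card_inter_le_add_one_of_sdiff_subset (hy ⟨k, hk⟩).subset
  exact notMem_and_mem_of_card_inter_lt (hx i) (hy i) (by have := hclimb i i.isLt; omega)

lemma mem_of_lt_of_exchange_chain (hx : ∀ i : Fin n, F i \ F (i + 1) = {x i})
    (hy : ∀ i : Fin n, F (i + 1) \ F i = {y i}) {W : Finset α} (hxW : ∀ i, x i ∉ W)
    (hyW : ∀ i, y i ∈ W) {i j : Fin n} (hji : j < i) : y j ∈ F i := by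
  have hmono : MonotoneOn (fun k => F k ∩ W) (Set.Iic n) := monotoneOn_nat_Iic_of_le_succ
    fun k hk => inter_subset_inter_of_sdiff_subset (hx ⟨k, hk⟩).subset (hxW ⟨k, hk⟩)
  have hyj : y j ∈ F (j + 1) ∩ W :=
    mem_inter.2 ⟨(mem_and_notMem_of_sdiff_eq_singleton (hy j)).1, hyW j⟩
  exact (mem_inter.1 (hmono (Set.mem_Iic.2 j.isLt) (Set.mem_Iic.2 i.isLt.le) hji hyj)).1

lemma notMem_of_lt_of_exchange_chain (hx : ∀ i : Fin n, F i \ F (i + 1) = {x i})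
    (hy : ∀ i : Fin n, F (i + 1) \ F i = {y i}) {V : Finset α} (hxV : ∀ i, x i ∈ V)
    (hyV : ∀ i, y i ∉ V) {i j : Fin n} (hji : j < i) : x j ∉ F i := fun hxj => by
  have hanti : AntitoneOn (fun k => F k ∩ V) (Set.Iic n) := antitoneOn_nat_Iic_of_succ_le
    fun k hk => inter_subset_inter_of_sdiff_subset (hy ⟨k, hk⟩).subset (hyV ⟨k, hk⟩)
  have := hanti (Set.mem_Iic.2 j.isLt) (Set.mem_Iic.2 i.isLt.le) hji (mem_inter.2 ⟨hxj, hxV j⟩)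
  exact (mem_and_notMem_of_sdiff_eq_singleton (hx j)).2 (mem_inter.1 this).1

theorem exists_exchange_labeling [Fintype α] {V W : Finset α}
    (hVW : Disjoint V W) (hcover : V ∪ W = univ) (hF0 : F 0 = V) (hFn : F n = W)
    (hcardF : ∀ k ≤ n, #(F k) = n) (hcard : ∀ k < n, #(F k ∩ F (k + 1)) = n - 1) :
    ∃ x y : Fin n → α, Injective x ∧ Injective y ∧
      univ.image x = V ∧ univ.image y = W ∧
      (∀ i : Fin n, F i \ F (i + 1) = {x i} ∧ F (i + 1) \ F i = {y i}) ∧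
      ∀ i j : Fin n, j < i → y j ∈ F i := by
  choose x hx using fun i : Fin n => exists_sdiff_eq_singleton (S := F i) (T := F (i + 1)) (by
    have := hcard i i.isLt; have := hcardF i i.isLt.le; have := i.pos; omega)
  choose y hy using fun i : Fin n => exists_sdiff_eq_singleton (S := F (i + 1)) (T := F i) (by
    have := hcard i i.isLt; have := hcardF (i + 1) i.isLt; have := i.pos; rw [inter_comm]; omega)
  have hswap := notMem_and_mem_of_exchange_chain hx hy (hF0 ▸ hVW)
    (by rw [hFn, inter_self, ← hFn, hcardF n le_rfl])
  have hxV (i : Fin n) : x i ∈ V :=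
    (mem_union.1 (hcover ▸ mem_univ (x i))).resolve_right (hswap i).1
  have hyF (i j : Fin n) (hji : j < i) : y j ∈ F i :=
    mem_of_lt_of_exchange_chain hx hy (fun i => (hswap i).1) (fun i => (hswap i).2) hji
  have hxinj : Injective x := injective_of_lt_imp_ne fun i j hij hxij =>
    notMem_of_lt_of_exchange_chain hx hy hxV (fun k => disjoint_right.1 hVW (hswap k).2) hij
      (hxij ▸ (mem_and_notMem_of_sdiff_eq_singleton (hx j)).1)
  have hyinj : Injective y := injective_of_lt_imp_ne fun i j hij hyij =>
    (mem_and_notMem_of_sdiff_eq_singleton (hy j)).2 (hyij ▸ hyF j i hij)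
  refine ⟨x, y, hxinj, hyinj, ?_, ?_, fun i => ⟨hx i, hy i⟩, hyF⟩
  · refine eq_of_subset_of_card_le (image_subset_iff.2 fun i _ => hxV i) ?_
    rw [card_image_of_injective _ hxinj, card_univ, Fintype.card_fin, ← hF0, hcardF 0 n.zero_le]
  · refine eq_of_subset_of_card_le (image_subset_iff.2 fun i _ => (hswap i).2) ?_
    rw [card_image_of_injective _ hyinj, card_univ, Fintype.card_fin, ← hFn, hcardF n le_rfl]

end ExchangeChain

section IndepSet

variable {α : Type*} {G : SimpleGraph α}

lemma maxIndepSet_iff_maximal {S : Finset α} : MaxIndepSet G S ↔ Maximal (IndepSet G) S :=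
  and_congr_right fun _ => forall₂_congr fun _ _ =>
    ⟨fun h hST => (h hST).le, fun h hST => (h hST).antisymm hST⟩

lemma IndepSet.exists_maxIndepSet_superset [Finite α] {S : Finset α} (hS : IndepSet G S) :
    ∃ M, MaxIndepSet G M ∧ S ⊆ M := by
  obtain ⟨M, hSM, hM⟩ := Finite.exists_le_maximal hS
  exact ⟨M, maxIndepSet_iff_maximal.2 hM, hSM⟩

lemma IndepSet.union [DecidableEq α] {S T : Finset α} (hS : IndepSet G S) (hT : IndepSet G T)
    (hST : ∀ u ∈ S \ T, ∀ v ∈ T \ S, ¬ G.Adj u v) : IndepSet G (S ∪ T) := by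
  have hcross : ∀ u ∈ S, ∀ v ∈ T, ¬ G.Adj u v := fun u hu v hv => by
    by_cases huT : u ∈ T
    · exact hT huT hv
    by_cases hvS : v ∈ S
    · exact hS hu hvS
    exact hST u (mem_sdiff.2 ⟨hu, huT⟩) v (mem_sdiff.2 ⟨hv, hvS⟩)
  intro u hu v hv
  rcases mem_union.1 hu with hu | hu <;> rcases mem_union.1 hv with hv | hv
  · exact hS hu hv
  · exact hcross u hu v hv
  · exact fun h => hcross v hv u hu h.symm
  · exact hT hu hv

lemma MaxIndepSet.adj_of_sdiff_eq_singleton [DecidableEq α] {S T : Finset α} {a b : α}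
    (hS : MaxIndepSet G S) (hT : IndepSet G T) (ha : S \ T = {a}) (hb : T \ S = {b}) :
    G.Adj a b := by
  by_contra hab
  have hunion := hS.2 (hS.1.union hT fun u hu v hv => by
    rw [ha, mem_singleton] at hu; rw [hb, mem_singleton] at hv; exact hu ▸ hv ▸ hab)
    subset_union_left
  obtain ⟨hbT, hbS⟩ := mem_and_notMem_of_sdiff_eq_singleton hb
  exact hbS (hunion ▸ mem_union_right S hbT)

lemma IndepSet.mem_or_mem_of_card_le [DecidableEq α] {ι : Type*} [Fintype ι] {x y : ι → α}
    {M : Finset α} (hM : IndepSet G M) (hxy : ∀ t, G.Adj (x t) (y t))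
    (hcover : M ⊆ univ.image x ∪ univ.image y) (hcard : Fintype.card ι ≤ #M) (t : ι) :
    x t ∈ M ∨ y t ∈ M := by
  classical
  set A := univ.filter fun t => x t ∈ M
  set B := univ.filter fun t => y t ∈ M
  have hAB : Disjoint A B := disjoint_filter.2 fun t _ hxt hyt => hM hxt hyt (hxy t)
  have hMAB : M ⊆ A.image x ∪ B.image y := fun v hv => by
    rcases mem_union.1 (hcover hv) with h | h <;> obtain ⟨s, -, rfl⟩ := mem_image.1 h
    · exact mem_union_left _ (mem_image_of_mem x (mem_filter.2 ⟨mem_univ s, hv⟩))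
    · exact mem_union_right _ (mem_image_of_mem y (mem_filter.2 ⟨mem_univ s, hv⟩))
  have hfull : A ∪ B = univ := eq_univ_of_card _ <| (card_le_univ _).antisymm <|
    calc Fintype.card ι ≤ #M := hcard
      _ ≤ #(A.image x) + #(B.image y) := (card_le_card hMAB).trans (card_union_le _ _)
      _ ≤ #A + #B := add_le_add card_image_le card_image_le
      _ = #(A ∪ B) := (card_union_of_disjoint hAB).symm
  have ht : t ∈ A ∪ B := hfull ▸ mem_univ t
  simpa [A, B] using ht

lemma adj_trans_of_card_le_of_matching [Fintype α] [DecidableEq α] {ι : Type*} [Fintype ι]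
    {x y : ι → α} (hxy : ∀ t, G.Adj (x t) (y t))
    (hcover : univ.image x ∪ univ.image y = univ)
    (hcard : ∀ M, MaxIndepSet G M → Fintype.card ι ≤ #M) {i j k : ι}
    (hij : G.Adj (x i) (y j)) (hjk : G.Adj (x j) (y k)) : G.Adj (x i) (y k) := by
  by_contra hik
  have hindep : IndepSet G {x i, y k} := by
    simp only [IndepSet, mem_insert, mem_singleton]
    rintro u (rfl | rfl) v (rfl | rfl) huv
    exacts [G.irrefl huv, hik huv, hik huv.symm, G.irrefl huv]
  obtain ⟨M, hM, hxyM⟩ := hindep.exists_maxIndepSet_superset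
  have hxM : x i ∈ M := hxyM (mem_insert_self _ _)
  have hyM : y k ∈ M := hxyM (mem_insert_of_mem (mem_singleton_self _))
  rcases hM.1.mem_or_mem_of_card_le hxy (hcover ▸ subset_univ M) (hcard M hM) j with hxj | hyj
  · exact hM.1 hxj hyM hjk
  · exact hM.1 hxM hyj hij

end IndepSet

theorem herzog_hibi_labeling_of_chain_general {α : Type*} [Fintype α] [DecidableEq α]
    (G : SimpleGraph α) (V W : Finset α) (n : ℕ)
    (hbip : IsBipartition G V W)
    (hunmixed : Unmixed G)
    (hV : V.card = n)
    (F : ℕ → Finset α)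
    (hF0 : F 0 = V) (hFn : F n = W)
    (hmax : ∀ i ≤ n, MaxIndepSet G (F i))
    (hcard : ∀ i < n, (F i ∩ F (i + 1)).card = n - 1) :
    W.card = n ∧
    ∃ x y : Fin n → α,
      Function.Injective x ∧ Function.Injective y ∧
      Finset.univ.image x = V ∧ Finset.univ.image y = W ∧
      (∀ i, G.Adj (x i) (y i)) ∧
      (∀ i j, G.Adj (x i) (y j) → (i : ℕ) ≤ (j : ℕ)) ∧
      (∀ i j k, G.Adj (x i) (y j) → G.Adj (x j) (y k) → G.Adj (x i) (y k)) := by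
  obtain ⟨hVW, hcover, -⟩ := hbip
  have hcardM : ∀ M, MaxIndepSet G M → #M = n := fun M hM =>
    (hunmixed hM (hF0 ▸ hmax 0 n.zero_le)).trans hV
  have hcardF : ∀ k ≤ n, #(F k) = n := fun k hk => hcardM _ (hmax k hk)
  obtain ⟨x, y, hxinj, hyinj, himx, himy, hexch, hyF⟩ :=
    exists_exchange_labeling hVW hcover hF0 hFn hcardF hcard
  have hedge (i : Fin n) : G.Adj (x i) (y i) :=
    (hmax i i.isLt.le).adj_of_sdiff_eq_singleton (hmax (i + 1) i.isLt).1 (hexch i).1 (hexch i).2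
  refine ⟨hFn ▸ hcardF n le_rfl, x, y, hxinj, hyinj, himx, himy, hedge, ?_, ?_⟩
  · intro i j hij
    by_contra! hji
    have hxF : x i ∈ F i := (mem_and_notMem_of_sdiff_eq_singleton (hexch i).1).1
    exact (hmax i i.isLt.le).1 hxF (hyF i j hji) hij
  · have hmatch : univ.image x ∪ univ.image y = univ := by rw [himx, himy, hcover]
    exact fun _ _ _ => adj_trans_of_card_le_of_matching hedge hmatch fun M hM => by
      rw [Fintype.card_fin, hcardM M hM]

/-- Theorem 1.3, (a) ⇒ (b): an unmixed bipartite graph with a chain of maximal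
independent sets `V = F₀, …, Fₙ = W` intersecting consecutively in cardinality `n - 1`
admits a Herzog–Hibi labeling `V = {x₁,…,xₙ}`, `W = {y₁,…,yₙ}` with (i) `{xᵢ,yᵢ}` edges,
(ii) `{xᵢ,yⱼ}` an edge implies `i ≤ j`, (iii) `{xᵢ,yⱼ}`, `{xⱼ,y_k}` edges implies
`{xᵢ,y_k}` an edge. -/
theorem herzog_hibi_labeling_of_chain {α : Type*} [Fintype α] [DecidableEq α]
    (G : SimpleGraph α) (V W : Finset α) (n : ℕ)
    (hbip : IsBipartition G V W)
    (hunmixed : Unmixed G)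
    (hVmax : MaxIndepSet G V) (hWmax : MaxIndepSet G W)
    (hV : V.card = n)
    (F : ℕ → Finset α)
    (hF0 : F 0 = V) (hFn : F n = W)
    (hmax : ∀ i ≤ n, MaxIndepSet G (F i))
    (hcard : ∀ i < n, (F i ∩ F (i + 1)).card = n - 1) :
    W.card = n ∧
    ∃ x y : Fin n → α,
      Function.Injective x ∧ Function.Injective y ∧
      Finset.univ.image x = V ∧ Finset.univ.image y = W ∧
      (∀ i, G.Adj (x i) (y i)) ∧
      (∀ i j, G.Adj (x i) (y j) → (i : ℕ) ≤ (j : ℕ)) ∧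
      (∀ i j k, G.Adj (x i) (y j) → G.Adj (x j) (y k) → G.Adj (x i) (y k)) :=
  herzog_hibi_labeling_of_chain_general G V W n hbip hunmixed hV F hF0 hFn hmax hcard
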